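/- arXiv:2503.00526 — 6 statements merged into one kernel-verified Lean document; each statement's English description precedes it below -/
import Mathlib

section
/- Let (F, d) be a compact metric space and L : F × F → ℝ a symmetric function that is Hölder continuous with exponent α ∈ (0,1] and constant c (in each variable: |L(x',y) − L(x,y)| ≤ c·d(x,x')^α). Then for any p ∈ [1,∞) and any Borel probability measures ρ, ρ̃ on F, the action S satisfies |S(ρ̃) − S(ρ)| ≤ 2c · W_p(ρ̃, ρ)^α. -/
/-!
With `V_μ x = ∫ L x y dμ(y)`, Fubini and the symmetry of `L` give
`S(μ) - S(ν) = (∫ V_μ dμ - ∫ V_μ dν) + (∫ V_ν dμ - ∫ V_ν dν)`. Each potential `V_μ` inherits the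
Hölder bound of `L`, so for every coupling `P` of `μ` and `ν` each bracket is at most
`c ∫ d^α dP`, and Jensen's inequality for the concave map `t ↦ t^(α/p)` gives
`∫ d^α dP ≤ (∫ d^p dP)^(α/p)`. Taking the infimum over couplings yields `2c W_p(μ, ν)^α`.
A negative `c` is only possible when `F` is a single point, where both sides vanish.
-/

open MeasureTheory

/-- The `p`-Wasserstein distance, defined via couplings. -/
noncomputable def wassersteinDist {F : Type*} [MetricSpace F] [MeasurableSpace F]
    (p : ℝ) (μ ν : Measure F) : ℝ :=
  (⨅ P : {P : Measure (F × F) // P.map Prod.fst = μ ∧ P.map Prod.snd = ν},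
      ∫ q, dist q.1 q.2 ^ p ∂(P.1)) ^ (1 / p)

open Function

section Holder

variable {X : Type*} {c α : ℝ}

theorem continuous_of_abs_sub_le_mul_rpow [PseudoMetricSpace X] {f : X → ℝ} (hα : 0 < α)
    (h : ∀ x x', |f x' - f x| ≤ c * dist x x' ^ α) : Continuous f := by
  refine continuous_iff_continuousAt.2 fun x => tendsto_iff_dist_tendsto_zero.2 ?_
  have hg : Continuous fun x' => c * dist x x' ^ α :=
    continuous_const.mul ((continuous_const.dist continuous_id).rpow_const fun _ => Or.inr hα.le)
  refine squeeze_zero (fun _ => dist_nonneg) (fun x' => (Real.dist_eq _ _).trans_le (h x x')) ?_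
  simpa [Real.zero_rpow hα.ne'] using hg.tendsto x

theorem continuous_uncurry_of_abs_sub_le_mul_rpow {Y : Type*} [PseudoMetricSpace X]
    [PseudoMetricSpace Y] {L : X → Y → ℝ} (hα : 0 < α)
    (h : ∀ x x' y y', |L x' y' - L x y| ≤ c * (dist x x' ^ α + dist y y' ^ α)) :
    Continuous (uncurry L) := by
  refine continuous_iff_continuousAt.2 fun q => tendsto_iff_dist_tendsto_zero.2 ?_
  have hg : Continuous fun q' : X × Y => c * (dist q.1 q'.1 ^ α + dist q.2 q'.2 ^ α) :=
    continuous_const.mul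
      (((continuous_const.dist continuous_fst).rpow_const fun _ => Or.inr hα.le).add
        ((continuous_const.dist continuous_snd).rpow_const fun _ => Or.inr hα.le))
  refine squeeze_zero (fun _ => dist_nonneg)
    (fun q' => (Real.dist_eq _ _).trans_le (h q.1 q'.1 q.2 q'.2)) ?_
  simpa [Real.zero_rpow hα.ne'] using hg.tendsto q

theorem abs_sub_le_add_of_symm [PseudoMetricSpace X] {L : X → X → ℝ}
    (hsymm : ∀ x y, L x y = L y x) (h : ∀ x x' y, |L x' y - L x y| ≤ c * dist x x' ^ α)
    (x x' y y' : X) : |L x' y' - L x y| ≤ c * (dist x x' ^ α + dist y y' ^ α) := by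
  have h₂ : |L x' y' - L x' y| ≤ c * dist y y' ^ α := by
    rw [hsymm x' y', hsymm x' y]
    exact h y y' x'
  calc |L x' y' - L x y| ≤ |L x' y' - L x' y| + |L x' y - L x y| := abs_sub_le _ _ _
    _ ≤ c * dist y y' ^ α + c * dist x x' ^ α := add_le_add h₂ (h x x' y)
    _ = c * (dist x x' ^ α + dist y y' ^ α) := by ring

theorem subsingleton_of_abs_sub_le_mul_rpow_of_neg [MetricSpace X] {f : X → ℝ} (hc : c < 0)
    (h : ∀ x x', |f x' - f x| ≤ c * dist x x' ^ α) : Subsingleton X := by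
  refine ⟨fun x x' => by_contra fun hne => ?_⟩
  have hd : 0 < dist x x' ^ α := Real.rpow_pos_of_pos (dist_pos.2 hne) α
  exact (mul_neg_of_neg_of_pos hc hd).not_ge ((abs_nonneg _).trans (h x x'))

end Holder

theorem integral_rpow_le_rpow_integral {Ω : Type*} [MeasurableSpace Ω] {P : Measure Ω}
    [IsProbabilityMeasure P] {u : Ω → ℝ} (hu : ∀ ω, 0 ≤ u ω) {r : ℝ} (hr₀ : 0 ≤ r)
    (hr₁ : r ≤ 1) (hui : Integrable u P) (hur : Integrable (fun ω => u ω ^ r) P) :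
    ∫ ω, u ω ^ r ∂P ≤ (∫ ω, u ω ∂P) ^ r :=
  (Real.concaveOn_rpow hr₀ hr₁).le_map_integral (Real.continuous_rpow_const hr₀).continuousOn
    isClosed_Ici (ae_of_all _ hu) hui hur

section Action

variable {X : Type*} [MeasurableSpace X]

noncomputable def interactionPotential (L : X → X → ℝ) (μ : Measure X) (x : X) : ℝ :=
  ∫ y, L x y ∂μ

noncomputable def interactionAction (L : X → X → ℝ) (μ : Measure X) : ℝ :=
  ∫ x, interactionPotential L μ x ∂μ

theorem abs_interactionPotential_sub_le [PseudoMetricSpace X] {c α : ℝ} {L : X → X → ℝ}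
    (μ : Measure X) [IsProbabilityMeasure μ] (hint : ∀ x, Integrable (L x) μ)
    (h : ∀ x x' y, |L x' y - L x y| ≤ c * dist x x' ^ α) (x x' : X) :
    |interactionPotential L μ x' - interactionPotential L μ x| ≤ c * dist x x' ^ α := by
  have := norm_integral_le_of_norm_le_const (μ := μ) (f := fun y => L x' y - L x y)
    (ae_of_all _ fun y => h x x' y)
  rwa [integral_sub (hint x') (hint x), probReal_univ, mul_one, Real.norm_eq_abs] at this

theorem integral_interactionPotential_comm {L : X → X → ℝ} (hsymm : ∀ x y, L x y = L y x)
    {μ ν : Measure X} [SFinite μ] [SFinite ν] (hint : Integrable (uncurry L) (μ.prod ν)) :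
    ∫ x, interactionPotential L ν x ∂μ = ∫ y, interactionPotential L μ y ∂ν := by
  refine (integral_integral_swap hint).trans ?_
  simp only [interactionPotential, hsymm _ _]

end Action

theorem wassersteinDist_of_subsingleton {X : Type*} [MetricSpace X] [Subsingleton X]
    [MeasurableSpace X] {p : ℝ} (hp : 0 < p) (μ ν : Measure X) : wassersteinDist p μ ν = 0 := by
  have hdist : ∀ x y : X, dist x y = 0 := fun x y => by rw [Subsingleton.elim x y, dist_self]
  simp [wassersteinDist, hdist, Real.zero_rpow hp.ne', Real.zero_rpow (inv_ne_zero hp.ne')]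

section Coupling

variable {X : Type*} [MetricSpace X] [CompactSpace X] [MeasurableSpace X] [BorelSpace X]
  {c α : ℝ}

theorem abs_integral_sub_integral_le_of_coupling {f : X → ℝ} (hf : Continuous f) (hα : 0 ≤ α)
    (h : ∀ x x', |f x' - f x| ≤ c * dist x x' ^ α) {μ ν : Measure X} (P : Measure (X × X))
    [IsFiniteMeasure P] (hPμ : P.map Prod.fst = μ) (hPν : P.map Prod.snd = ν) :
    |∫ x, f x ∂μ - ∫ x, f x ∂ν| ≤ c * ∫ q, dist q.1 q.2 ^ α ∂P := by
  have hint : ∀ g : X × X → ℝ, Continuous g → Integrable g P := fun g hg =>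
    hg.integrable_of_hasCompactSupport (.of_compactSpace g)
  rw [← hPμ, ← hPν, integral_map measurable_fst.aemeasurable hf.aestronglyMeasurable,
    integral_map measurable_snd.aemeasurable hf.aestronglyMeasurable,
    ← integral_sub (hint (fun q => f q.1) (hf.comp continuous_fst))
      (hint (fun q => f q.2) (hf.comp continuous_snd)),
    ← integral_const_mul]
  refine abs_integral_le_integral_abs.trans (integral_mono
    (hint _ ((hf.comp continuous_fst).sub (hf.comp continuous_snd))).abs
    (hint _ (continuous_const.mul ((continuous_fst.dist continuous_snd).rpow_const
      fun _ => Or.inr hα))) fun q => ?_)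
  simpa only [abs_sub_comm, dist_comm] using h q.2 q.1

theorem abs_interactionAction_sub_le_of_coupling {L : X → X → ℝ}
    (hsymm : ∀ x y, L x y = L y x) (hα : 0 < α)
    (h : ∀ x x' y, |L x' y - L x y| ≤ c * dist x x' ^ α)
    {μ ν : Measure X} [IsProbabilityMeasure μ] [IsProbabilityMeasure ν] (P : Measure (X × X))
    (hPμ : P.map Prod.fst = μ) (hPν : P.map Prod.snd = ν) :
    |interactionAction L μ - interactionAction L ν| ≤ 2 * c * ∫ q, dist q.1 q.2 ^ α ∂P := by
  have : IsProbabilityMeasure P := by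
    subst hPμ
    exact Measure.isProbabilityMeasure_of_map Prod.fst
  have hL : Continuous (uncurry L) :=
    continuous_uncurry_of_abs_sub_le_mul_rpow hα (abs_sub_le_add_of_symm hsymm h)
  have hV : ∀ (m : Measure X) [IsProbabilityMeasure m] (x x' : X),
      |interactionPotential L m x' - interactionPotential L m x| ≤ c * dist x x' ^ α :=
    fun m _ => abs_interactionPotential_sub_le m (fun x =>
      (hL.comp (Continuous.prodMk_right x)).integrable_of_hasCompactSupport (.of_compactSpace _)) h
  have hμ := abs_integral_sub_integral_le_of_coupling
    (continuous_of_abs_sub_le_mul_rpow hα (hV μ)) hα.le (hV μ) P hPμ hPν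
  have hν := abs_integral_sub_integral_le_of_coupling
    (continuous_of_abs_sub_le_mul_rpow hα (hV ν)) hα.le (hV ν) P hPμ hPν
  have hswap := integral_interactionPotential_comm hsymm
    (hL.integrable_of_hasCompactSupport (.of_compactSpace _) : Integrable (uncurry L) (ν.prod μ))
  calc |interactionAction L μ - interactionAction L ν|
      = |(∫ x, interactionPotential L μ x ∂μ - ∫ x, interactionPotential L μ x ∂ν) +
          (∫ x, interactionPotential L ν x ∂μ - ∫ x, interactionPotential L ν x ∂ν)| := by
        rw [interactionAction, interactionAction, hswap]
        congr 1
        ring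
    _ ≤ c * ∫ q, dist q.1 q.2 ^ α ∂P + c * ∫ q, dist q.1 q.2 ^ α ∂P :=
        (abs_add_le _ _).trans (add_le_add hμ hν)
    _ = 2 * c * ∫ q, dist q.1 q.2 ^ α ∂P := by ring

theorem integral_dist_rpow_le_rpow_integral {p : ℝ} (P : Measure (X × X))
    [IsProbabilityMeasure P] (hα : 0 < α) (hαp : α ≤ p) :
    ∫ q, dist q.1 q.2 ^ α ∂P ≤ (∫ q, dist q.1 q.2 ^ p ∂P) ^ (α / p) := by
  have hp : 0 < p := hα.trans_le hαp
  have hpow : ∀ q : X × X, (dist q.1 q.2 ^ p) ^ (α / p) = dist q.1 q.2 ^ α := fun q => by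
    rw [← Real.rpow_mul dist_nonneg, mul_div_cancel₀ _ hp.ne']
  have hint : ∀ s : ℝ, 0 ≤ s → Integrable (fun q : X × X => dist q.1 q.2 ^ s) P := fun s hs =>
    ((continuous_fst.dist continuous_snd).rpow_const
      fun _ => Or.inr hs).integrable_of_hasCompactSupport (.of_compactSpace _)
  simpa only [hpow] using integral_rpow_le_rpow_integral (fun q => by positivity)
    (div_pos hα hp).le ((div_le_one hp).2 hαp) (hint p hp.le)
    (by simpa only [hpow] using hint α hα.le)

theorem le_mul_wassersteinDist_rpow {p K a : ℝ} {μ ν : Measure X} [IsProbabilityMeasure μ]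
    [IsProbabilityMeasure ν] (hα : 0 < α) (hαp : α ≤ p) (hK : 0 ≤ K)
    (h : ∀ P : Measure (X × X), P.map Prod.fst = μ → P.map Prod.snd = ν →
      a ≤ K * ∫ q, dist q.1 q.2 ^ α ∂P) :
    a ≤ K * wassersteinDist p μ ν ^ α := by
  let r := α / p
  have hr₀ : 0 < r := div_pos hα (hα.trans_le hαp)
  let I : {P : Measure (X × X) // P.map Prod.fst = μ ∧ P.map Prod.snd = ν} → ℝ :=
    fun P => ∫ q, dist q.1 q.2 ^ p ∂P.1
  have : Nonempty {P : Measure (X × X) // P.map Prod.fst = μ ∧ P.map Prod.snd = ν} :=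
    ⟨⟨μ.prod ν, by simp, by simp⟩⟩
  have hI : ∀ P, 0 ≤ I P := fun P => integral_nonneg fun q => by positivity
  have hcoupling : ∀ P, a ≤ K * I P ^ r := by
    rintro ⟨P, hPμ, hPν⟩
    have : IsProbabilityMeasure P := by
      subst hPμ
      exact Measure.isProbabilityMeasure_of_map Prod.fst
    exact (h P hPμ hPν).trans
      (mul_le_mul_of_nonneg_left (integral_dist_rpow_le_rpow_integral P hα hαp) hK)
  -- `t ↦ t ^ r` is only monotone on `[0, ∞)`, hence the `max`.
  let φ : ℝ → ℝ := fun t => K * max t 0 ^ r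
  have hφ : Monotone φ := fun s t hst =>
    mul_le_mul_of_nonneg_left
      (Real.rpow_le_rpow (le_max_right s 0) (max_le_max hst le_rfl) hr₀.le) hK
  have hφc : Continuous φ :=
    continuous_const.mul ((continuous_id.max continuous_const).rpow_const fun _ => Or.inr hr₀.le)
  have hInf : 0 ≤ ⨅ P, I P := le_ciInf hI
  calc a ≤ ⨅ P, φ (I P) := le_ciInf fun P => by simpa [φ, max_eq_left (hI P)] using hcoupling P
    _ = φ (⨅ P, I P) := (hφ.map_ciInf_of_continuousAt hφc.continuousAt ⟨0, by
        rintro _ ⟨P, rfl⟩; exact hI P⟩).symm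
    _ = K * wassersteinDist p μ ν ^ α := by
        rw [wassersteinDist, ← Real.rpow_mul hInf, one_div_mul_eq_div]
        simp only [φ, max_eq_left hInf]
        rfl

end Coupling

theorem action_holder_wasserstein {F : Type*} [MetricSpace F] [CompactSpace F]
    [MeasurableSpace F] [BorelSpace F]
    (L : F → F → ℝ) (hLsymm : ∀ x y, L x y = L y x)
    (α : ℝ) (hα0 : 0 < α) (hα1 : α ≤ 1) (c : ℝ)
    (hHolder : ∀ x x' y, |L x' y - L x y| ≤ c * dist x x' ^ α)
    (p : ℝ) (hp : 1 ≤ p)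
    (ρ ρ' : Measure F) [IsProbabilityMeasure ρ] [IsProbabilityMeasure ρ'] :
    |(∫ x, ∫ y, L x y ∂ρ' ∂ρ') - ∫ x, ∫ y, L x y ∂ρ ∂ρ| ≤
      2 * c * wassersteinDist p ρ' ρ ^ α := by
  have hcoupling := abs_interactionAction_sub_le_of_coupling (μ := ρ') (ν := ρ) hLsymm hα0 hHolder
  change |interactionAction L ρ' - interactionAction L ρ| ≤ _
  rcases lt_or_ge c 0 with hc | hc
  · have : Nonempty F := nonempty_of_isProbabilityMeasure ρ
    have : Subsingleton F := subsingleton_of_abs_sub_le_mul_rpow_of_neg hc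
      fun x x' => hHolder x x' (Classical.arbitrary F)
    rw [wassersteinDist_of_subsingleton (by linarith), Real.zero_rpow hα0.ne', mul_zero]
    exact (hcoupling (ρ'.prod ρ) (by simp) (by simp)).trans
      (mul_nonpos_of_nonpos_of_nonneg (by linarith) (integral_nonneg fun q => by positivity))
  · exact le_mul_wassersteinDist_rpow hα0 (hα1.trans hp) (by positivity) hcoupling
end

section
/- Let (X, d) be a metric space, S : X → [0,∞), h > 0, and (ρ_j)_{j≥0} a sequence in X with d(ρ_j, ρ_{j−1}) ≤ √(2h(S(ρ_{j−1}) − S(ρ_j))) and S(ρ_j) ≤ S(ρ_{j−1}) for all j ≥ 1. Define the interpolated curve ρ^h(t) in the metric space by piecewise geodesic/convex interpolation satisfying d(ρ^h(t), ρ_{⌊t/h⌋}) ≤ (t/h − ⌊t/h⌋) d(ρ_{⌊t/h⌋}, ρ_{⌊t/h⌋+1}) (and the analogous bound to ρ_{⌊t/h⌋+1}). Then for all 0 < t_1 < t_2, d(ρ^h(t_1), ρ^h(t_2)) ≤ √2 · √(t_2 − t_1 + h) · √(S(ρ_0)). -/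
open Filter Topology

set_option maxHeartbeats 1000000 in
theorem interpolated_curve_holder_estimate {X : Type*} [MetricSpace X]
    (S : X → ℝ) (hS : ∀ x, 0 ≤ S x)
    (h : ℝ) (hh : 0 < h) (ρ : ℕ → X)
    (hstep : ∀ j : ℕ, 1 ≤ j →
      dist (ρ j) (ρ (j - 1)) ≤ Real.sqrt (2 * h * (S (ρ (j - 1)) - S (ρ j))))
    (hmono : ∀ j : ℕ, 1 ≤ j → S (ρ j) ≤ S (ρ (j - 1)))
    (c : ℝ → X)
    (hc1 : ∀ t : ℝ, 0 < t →
      dist (c t) (ρ ⌊t / h⌋₊) ≤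
        (t / h - (⌊t / h⌋₊ : ℝ)) * dist (ρ ⌊t / h⌋₊) (ρ (⌊t / h⌋₊ + 1)))
    (hc2 : ∀ t : ℝ, 0 < t →
      dist (c t) (ρ (⌊t / h⌋₊ + 1)) ≤
        ((⌊t / h⌋₊ + 1 : ℝ) - t / h) * dist (ρ ⌊t / h⌋₊) (ρ (⌊t / h⌋₊ + 1))) :
    ∀ t₁ t₂ : ℝ, 0 < t₁ → t₁ < t₂ →
      dist (c t₁) (c t₂) ≤
        Real.sqrt 2 * Real.sqrt (t₂ - t₁ + h) * Real.sqrt (S (ρ 0)) := by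
  intro t₁ t₂ ht₁ ht₁₂
  have ht₂ : 0 < t₂ := ht₁.trans ht₁₂
  set n₁ := ⌊t₁ / h⌋₊ with hn₁def
  set n₂ := ⌊t₂ / h⌋₊ with hn₂def
  -- monotonicity of S along the sequence
  have hmono' : ∀ j : ℕ, S (ρ (j + 1)) ≤ S (ρ j) := by
    intro j
    have := hmono (j + 1) (by omega)
    simpa using this
  have hS0 : ∀ n : ℕ, S (ρ n) ≤ S (ρ 0) := by
    intro n
    induction n with
    | zero => exact le_rfl
    | succ k ih => exact (hmono' k).trans ih
  have hΔ : ∀ j : ℕ, 0 ≤ S (ρ j) - S (ρ (j + 1)) := fun j => sub_nonneg.2 (hmono' j)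
  have hd : ∀ j : ℕ, dist (ρ j) (ρ (j + 1)) ≤
      Real.sqrt (2 * h * (S (ρ j) - S (ρ (j + 1)))) := by
    intro j
    have := hstep (j + 1) (by omega)
    simpa [dist_comm] using this
  -- floor bounds
  have hfl₁ : (n₁ : ℝ) ≤ t₁ / h := Nat.floor_le (by positivity)
  have hfu₁ : t₁ / h < (n₁ : ℝ) + 1 := Nat.lt_floor_add_one _
  have hfl₂ : (n₂ : ℝ) ≤ t₂ / h := Nat.floor_le (by positivity)
  have hfu₂ : t₂ / h < (n₂ : ℝ) + 1 := Nat.lt_floor_add_one _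
  have hn₁₂ : n₁ ≤ n₂ := Nat.floor_le_floor (by gcongr)
  -- rewrite the RHS as a single square root
  have hRHS : Real.sqrt 2 * Real.sqrt (t₂ - t₁ + h) * Real.sqrt (S (ρ 0))
      = Real.sqrt (2 * (t₂ - t₁ + h) * S (ρ 0)) := by
    rw [← Real.sqrt_mul (by norm_num), ← Real.sqrt_mul (by nlinarith)]
  rw [hRHS]
  have hS0nn : 0 ≤ S (ρ 0) := hS _
  rcases eq_or_lt_of_le hn₁₂ with heq | hlt
  · -- same interval: go through either ρ n₁ or ρ (n₁ + 1)
    have key : dist (c t₁) (c t₂) ≤ dist (ρ n₁) (ρ (n₁ + 1)) := by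
      have hdnn : 0 ≤ dist (ρ n₁) (ρ (n₁ + 1)) := dist_nonneg
      by_cases hcase : (t₁ / h - n₁) + (t₂ / h - n₁) ≤ 1
      · have h1 : dist (c t₁) (ρ n₁) ≤ (t₁ / h - (n₁ : ℝ)) * dist (ρ n₁) (ρ (n₁ + 1)) :=
          hc1 t₁ ht₁
        have h2 : dist (c t₂) (ρ n₂) ≤ (t₂ / h - (n₂ : ℝ)) * dist (ρ n₂) (ρ (n₂ + 1)) :=
          hc1 t₂ ht₂
        rw [← heq] at h2
        calc dist (c t₁) (c t₂) ≤ dist (c t₁) (ρ n₁) + dist (c t₂) (ρ n₁) := by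
              rw [dist_comm (c t₂)]; exact dist_triangle _ _ _
          _ ≤ (t₁ / h - n₁) * dist (ρ n₁) (ρ (n₁ + 1))
              + (t₂ / h - n₁) * dist (ρ n₁) (ρ (n₁ + 1)) := add_le_add h1 h2
          _ ≤ dist (ρ n₁) (ρ (n₁ + 1)) := by nlinarith
      · have hcase' : ((n₁ : ℝ) + 1 - t₁ / h) + ((n₁ : ℝ) + 1 - t₂ / h) ≤ 1 := by
          push_neg at hcase; linarith
        have h1 : dist (c t₁) (ρ (n₁ + 1)) ≤
            ((n₁ : ℝ) + 1 - t₁ / h) * dist (ρ n₁) (ρ (n₁ + 1)) := hc2 t₁ ht₁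
        have h2 : dist (c t₂) (ρ (n₂ + 1)) ≤
            ((n₂ : ℝ) + 1 - t₂ / h) * dist (ρ n₂) (ρ (n₂ + 1)) := hc2 t₂ ht₂
        rw [← heq] at h2
        have hc1nn : (0:ℝ) ≤ (n₁ : ℝ) + 1 - t₁ / h := by linarith
        have hc2nn : (0:ℝ) ≤ (n₁ : ℝ) + 1 - t₂ / h := by
          rw [← heq] at hfu₂; linarith
        calc dist (c t₁) (c t₂) ≤ dist (c t₁) (ρ (n₁ + 1)) + dist (c t₂) (ρ (n₁ + 1)) := by
              rw [dist_comm (c t₂)]; exact dist_triangle _ _ _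
          _ ≤ ((n₁ : ℝ) + 1 - t₁ / h) * dist (ρ n₁) (ρ (n₁ + 1))
              + ((n₁ : ℝ) + 1 - t₂ / h) * dist (ρ n₁) (ρ (n₁ + 1)) := add_le_add h1 h2
          _ ≤ dist (ρ n₁) (ρ (n₁ + 1)) := by nlinarith
    refine key.trans ((hd n₁).trans (Real.sqrt_le_sqrt ?_))
    have h1 := hS0 n₁
    have h2 := hS (ρ (n₁ + 1))
    nlinarith
  · -- n₁ < n₂: chain through intermediate points
    set a : ℕ → ℝ := fun j =>
      if j = n₁ then (n₁ : ℝ) + 1 - t₁ / h else if j = n₂ then t₂ / h - n₂ else 1 with hadef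
    set g : ℕ → ℝ := fun j => Real.sqrt (2 * h * (S (ρ j) - S (ρ (j + 1)))) with hgdef
    have hgnn : ∀ j, 0 ≤ g j := fun j => Real.sqrt_nonneg _
    have hann : ∀ j, 0 ≤ a j := by
      intro j
      simp only [hadef]
      split_ifs with h1 h2
      · linarith
      · linarith
      · norm_num
    have hale : ∀ j, a j ≤ 1 := by
      intro j
      simp only [hadef]
      split_ifs with h1 h2
      · linarith
      · linarith
      · exact le_rfl
    have han₁ : a n₁ = (n₁ : ℝ) + 1 - t₁ / h := by simp [hadef]
    have han₂ : a n₂ = t₂ / h - n₂ := by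
      simp only [hadef]
      rw [if_neg (by omega : ¬ n₂ = n₁)]
      simp
    -- step 1: triangle inequality chain
    have step1 : dist (c t₁) (c t₂) ≤ ∑ j ∈ Finset.Ico n₁ (n₂ + 1), a j * g j := by
      have hchain : dist (ρ (n₁ + 1)) (ρ n₂) ≤
          ∑ j ∈ Finset.Ico (n₁ + 1) n₂, dist (ρ j) (ρ (j + 1)) :=
        dist_le_Ico_sum_dist ρ (by omega)
      have hmid : ∑ j ∈ Finset.Ico (n₁ + 1) n₂, dist (ρ j) (ρ (j + 1)) ≤
          ∑ j ∈ Finset.Ico (n₁ + 1) n₂, a j * g j := by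
        refine Finset.sum_le_sum ?_
        intro j hj
        simp only [Finset.mem_Ico] at hj
        have : a j = 1 := by
          simp only [hadef]
          rw [if_neg (by omega), if_neg (by omega)]
        rw [this, one_mul]
        exact hd j
      have hsplit : ∑ j ∈ Finset.Ico n₁ (n₂ + 1), a j * g j
          = a n₁ * g n₁ + ∑ j ∈ Finset.Ico (n₁ + 1) n₂, a j * g j + a n₂ * g n₂ := by
        rw [Finset.sum_Ico_succ_top (by omega) (fun j => a j * g j),
          Finset.sum_eq_sum_Ico_succ_bot (by omega) (fun j => a j * g j)]
      have hfirst : dist (c t₁) (ρ (n₁ + 1)) ≤ a n₁ * g n₁ := by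
        refine (hc2 t₁ ht₁).trans ?_
        rw [han₁]
        exact mul_le_mul_of_nonneg_left (hd n₁) (by linarith)
      have hlast : dist (ρ n₂) (c t₂) ≤ a n₂ * g n₂ := by
        rw [dist_comm]
        refine (hc1 t₂ ht₂).trans ?_
        rw [han₂]
        exact mul_le_mul_of_nonneg_left (hd n₂) (by linarith)
      calc dist (c t₁) (c t₂)
          ≤ dist (c t₁) (ρ (n₁ + 1)) + dist (ρ (n₁ + 1)) (ρ n₂) + dist (ρ n₂) (c t₂) :=
            dist_triangle4 _ _ _ _
        _ ≤ a n₁ * g n₁ + ∑ j ∈ Finset.Ico (n₁ + 1) n₂, a j * g j + a n₂ * g n₂ :=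
            add_le_add (add_le_add hfirst (hchain.trans hmid)) hlast
        _ = ∑ j ∈ Finset.Ico n₁ (n₂ + 1), a j * g j := hsplit.symm
    -- sum of g²
    have hgsq : ∑ j ∈ Finset.Ico n₁ (n₂ + 1), g j ^ 2 ≤ 2 * h * S (ρ 0) := by
      have heach : ∀ j ∈ Finset.Ico n₁ (n₂ + 1), g j ^ 2
          = 2 * h * (S (ρ j) - S (ρ (j + 1))) := by
        intro j _
        exact Real.sq_sqrt (by nlinarith [hΔ j])
      rw [Finset.sum_congr rfl heach, ← Finset.mul_sum]
      have hsub : ∑ j ∈ Finset.Ico n₁ (n₂ + 1), (S (ρ j) - S (ρ (j + 1)))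
          ≤ ∑ j ∈ Finset.range (n₂ + 1), (S (ρ j) - S (ρ (j + 1))) := by
        refine Finset.sum_le_sum_of_subset_of_nonneg ?_ ?_
        · intro x hx
          simp only [Finset.mem_Ico] at hx
          simp only [Finset.mem_range]
          omega
        · intro j _ _
          exact hΔ j
      have htel : ∑ j ∈ Finset.range (n₂ + 1), (S (ρ j) - S (ρ (j + 1)))
          = S (ρ 0) - S (ρ (n₂ + 1)) := Finset.sum_range_sub' (fun j => S (ρ j)) (n₂ + 1)
      have := hS (ρ (n₂ + 1))
      nlinarith [hsub, htel]
    -- sum of a² ≤ sum of a = (t₂ - t₁)/h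
    have hasum : ∑ j ∈ Finset.Ico n₁ (n₂ + 1), a j = (t₂ - t₁) / h := by
      rw [Finset.sum_Ico_succ_top (by omega) a, Finset.sum_eq_sum_Ico_succ_bot (by omega) a]
      have hmid : ∑ j ∈ Finset.Ico (n₁ + 1) n₂, a j = ((n₂ : ℝ) - (n₁ + 1)) := by
        rw [Finset.sum_congr rfl (fun j hj => ?_)]
        · rw [Finset.sum_const, Nat.card_Ico, nsmul_eq_mul, mul_one]
          have : n₁ + 1 ≤ n₂ := by omega
          push_cast [Nat.cast_sub this]
          ring
        · simp only [Finset.mem_Ico] at hj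
          simp only [hadef]
          rw [if_neg (by omega), if_neg (by omega)]
      rw [hmid, han₁, han₂]
      field_simp
      ring
    have hasq : ∑ j ∈ Finset.Ico n₁ (n₂ + 1), a j ^ 2 ≤ (t₂ - t₁) / h := by
      rw [← hasum]
      refine Finset.sum_le_sum (fun j _ => ?_)
      nlinarith [hann j, hale j]
    -- Cauchy–Schwarz
    have hCS := Finset.sum_mul_sq_le_sq_mul_sq (Finset.Ico n₁ (n₂ + 1)) a g
    have hsum_nn : 0 ≤ ∑ j ∈ Finset.Ico n₁ (n₂ + 1), a j * g j :=
      Finset.sum_nonneg (fun j _ => mul_nonneg (hann j) (hgnn j))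
    have hfin : (∑ j ∈ Finset.Ico n₁ (n₂ + 1), a j * g j) ^ 2
        ≤ 2 * (t₂ - t₁ + h) * S (ρ 0) := by
      have h1 : (∑ j ∈ Finset.Ico n₁ (n₂ + 1), a j * g j) ^ 2
          ≤ ((t₂ - t₁) / h) * (2 * h * S (ρ 0)) := by
        refine hCS.trans ?_
        refine mul_le_mul hasq hgsq (Finset.sum_nonneg (fun j _ => sq_nonneg _)) ?_
        have : (0:ℝ) < t₂ - t₁ := by linarith
        positivity
      have h2 : ((t₂ - t₁) / h) * (2 * h * S (ρ 0)) = 2 * (t₂ - t₁) * S (ρ 0) := by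
        field_simp
      have h3 : 2 * (t₂ - t₁) * S (ρ 0) ≤ 2 * (t₂ - t₁ + h) * S (ρ 0) := by
        nlinarith [mul_nonneg hh.le hS0nn]
      linarith [h1, h2.symm.le, h2.le, h3]
    refine step1.trans ?_
    have hynn : (0:ℝ) ≤ 2 * (t₂ - t₁ + h) * S (ρ 0) :=
      mul_nonneg (by linarith) hS0nn
    exact (Real.le_sqrt hsum_nn hynn).mpr hfin
end

section
/- Let F be a compact metric space and L : F × F → [0,∞) continuous and symmetric. If ρ is a minimizer of S(μ) = ∫∫ L dμ dμ over Borel probability measures on F, then the function ℓ(x) = ∫_F L(x,y) dρ(y) satisfies ℓ(x) = inf_F ℓ for all x in the support of ρ (Euler–Lagrange equations). -/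
/-!
Write `ℓ = potential L ρ` and `S = energy L ρ = ∫ ℓ dρ`. Perturbing ρ towards a Dirac mass,
`(1 - t) ρ + t δ_z`, changes the energy by `2 t (ℓ z - S) + O(t²)`, so minimality gives
`S ≤ ℓ z` for every `z`, i.e. `∫ ℓ dρ ≤ inf ℓ`. Hence the continuous function `ℓ - inf ℓ ≥ 0`
vanishes ρ-almost everywhere, and therefore everywhere on the support of ρ.
-/

open MeasureTheory Filter Topology

lemma nonneg_of_forall_nonneg_mul_add_mul_sq {a b : ℝ}
    (h : ∀ t : ℝ, 0 < t → t ≤ 1 → 0 ≤ a * t + b * t ^ 2) : 0 ≤ a := by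
  have hcont : Continuous fun t : ℝ => a + b * t := by fun_prop
  have hlim : Tendsto (fun t : ℝ => a + b * t) (𝓝[>] 0) (𝓝 a) :=
    tendsto_nhdsWithin_of_tendsto_nhds (hcont.tendsto' 0 a (by simp))
  refine ge_of_tendsto hlim ?_
  filter_upwards [Ioc_mem_nhdsGT (zero_lt_one' ℝ)] with t ⟨ht0, ht1⟩
  have hdiv : 0 ≤ t * (a + b * t) := by linear_combination h t ht0 ht1
  exact nonneg_of_mul_nonneg_right hdiv ht0

lemma Continuous.eq_of_ae_eq_of_mem_support {X Y : Type*} [TopologicalSpace X]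
    [MeasurableSpace X] [TopologicalSpace Y] [T2Space Y] {μ : Measure X} {f g : X → Y}
    (hf : Continuous f) (hg : Continuous g) (hfg : f =ᵐ[μ] g) {x : X} (hx : x ∈ μ.support) :
    f x = g x := by
  by_contra hne
  have hU : μ {w | f w ≠ g w} = 0 := ae_iff.mp hfg
  exact Measure.subset_compl_support_of_isOpen (isOpen_ne_fun hf hg) hU hne hx

namespace MeasureTheory

noncomputable def energy {X : Type*} [MeasurableSpace X] (L : X → X → ℝ) (μ : Measure X) :
    ℝ :=
  ∫ x, ∫ y, L x y ∂μ ∂μ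

noncomputable def potential {X : Type*} [MeasurableSpace X] (L : X → X → ℝ) (μ : Measure X)
    (x : X) : ℝ :=
  ∫ y, L x y ∂μ

noncomputable def Measure.diracPerturbation {X : Type*} [MeasurableSpace X] (μ : Measure X)
    (t : ℝ) (z : X) : Measure X :=
  ENNReal.ofReal (1 - t) • μ + ENNReal.ofReal t • Measure.dirac z

lemma Measure.isProbabilityMeasure_diracPerturbation {X : Type*} [MeasurableSpace X]
    {μ : Measure X} [IsProbabilityMeasure μ] {t : ℝ} (ht0 : 0 ≤ t) (ht1 : t ≤ 1) (z : X) :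
    IsProbabilityMeasure (μ.diracPerturbation t z) := by
  constructor
  simp [Measure.diracPerturbation, ← ENNReal.ofReal_add (sub_nonneg.mpr ht1) ht0]

section CompactSpace

variable {X : Type*} [TopologicalSpace X] [CompactSpace X] [MeasurableSpace X]
  [OpensMeasurableSpace X] {μ : Measure X} [IsFiniteMeasure μ]

lemma _root_.Continuous.integrable_of_compactSpace {f : X → ℝ} (hf : Continuous f) :
    Integrable f μ :=
  hf.integrable_of_hasCompactSupport (HasCompactSupport.of_compactSpace f)

lemma integral_diracPerturbation {f : X → ℝ} (hf : Continuous f) {t : ℝ} (ht0 : 0 ≤ t)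
    (ht1 : t ≤ 1) (z : X) :
    ∫ w, f w ∂(μ.diracPerturbation t z) = (1 - t) * ∫ w, f w ∂μ + t * f z := by
  have hμ : Integrable f μ := hf.integrable_of_compactSpace
  have hδ : Integrable f (Measure.dirac z) := hf.integrable_of_compactSpace
  rw [Measure.diracPerturbation, integral_add_measure (hμ.smul_measure ENNReal.ofReal_ne_top)
      (hδ.smul_measure ENNReal.ofReal_ne_top),
    integral_smul_measure, integral_smul_measure, integral_dirac' f z hf.stronglyMeasurable,
    ENNReal.toReal_ofReal (sub_nonneg.mpr ht1), ENNReal.toReal_ofReal ht0, smul_eq_mul,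
    smul_eq_mul]

lemma apply_eq_of_forall_le_of_integral_le [IsProbabilityMeasure μ] {f : X → ℝ}
    (hf : Continuous f) {m : ℝ} (hm : ∀ w, m ≤ f w) (hfm : ∫ w, f w ∂μ ≤ m) {x : X}
    (hx : x ∈ μ.support) : f x = m := by
  have hint : ∫ w, (f w - m) ∂μ = 0 := by
    refine le_antisymm ?_ (integral_nonneg fun w => sub_nonneg.mpr (hm w))
    rw [integral_sub hf.integrable_of_compactSpace (integrable_const m)]
    simpa using hfm
  have hae : (fun w => f w - m) =ᵐ[μ] 0 :=
    (integral_eq_zero_iff_of_nonneg (fun w => sub_nonneg.mpr (hm w))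
      (hf.integrable_of_compactSpace.sub (integrable_const m))).mp hint
  exact sub_eq_zero.mp
    (Continuous.eq_of_ae_eq_of_mem_support (hf.sub continuous_const) continuous_const hae hx)

variable {L : X → X → ℝ} (hL : Continuous fun q : X × X => L q.1 q.2)
include hL

lemma continuous_potential [FirstCountableTopology X] [LocallyCompactSpace X] :
    Continuous (potential L μ) := by
  show Continuous fun x => ∫ y, L x y ∂μ
  simpa using continuous_parametric_integral_of_continuous (μ := μ) hL isCompact_univ

lemma potential_diracPerturbation {t : ℝ} (ht0 : 0 ≤ t) (ht1 : t ≤ 1) (z x : X) :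
    potential L (μ.diracPerturbation t z) x = (1 - t) * potential L μ x + t * L x z :=
  integral_diracPerturbation (hL.comp (Continuous.prodMk_right x)) ht0 ht1 z

lemma energy_diracPerturbation [FirstCountableTopology X] [LocallyCompactSpace X]
    (hLsymm : ∀ x y, L x y = L y x) {t : ℝ} (ht0 : 0 ≤ t) (ht1 : t ≤ 1) (z : X) :
    energy L (μ.diracPerturbation t z)
      = (1 - t) ^ 2 * energy L μ + 2 * t * (1 - t) * potential L μ z + t ^ 2 * L z z := by
  have hℓ : Continuous (potential L μ) := continuous_potential hL
  have hLz : Continuous fun w => L w z := hL.comp (Continuous.prodMk_left z)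
  have hsymm : ∫ w, L w z ∂μ = potential L μ z := integral_congr_ae (.of_forall (hLsymm · z))
  calc energy L (μ.diracPerturbation t z)
      = ∫ w, ((1 - t) * potential L μ w + t * L w z) ∂(μ.diracPerturbation t z) := by
        simp_rw [← potential_diracPerturbation hL ht0 ht1]; rfl
    _ = (1 - t) * ((1 - t) * energy L μ + t * potential L μ z)
          + t * ((1 - t) * potential L μ z + t * L z z) := by
        rw [integral_diracPerturbation (by fun_prop) ht0 ht1, integral_add, integral_const_mul,
          integral_const_mul, hsymm]
        · rfl
        · exact hℓ.integrable_of_compactSpace.const_mul _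
        · exact hLz.integrable_of_compactSpace.const_mul _
    _ = _ := by ring

lemma energy_le_potential_of_forall_energy_le [IsProbabilityMeasure μ]
    [FirstCountableTopology X] [LocallyCompactSpace X] (hLsymm : ∀ x y, L x y = L y x)
    (hmin : ∀ ν : Measure X, IsProbabilityMeasure ν → energy L μ ≤ energy L ν) (z : X) :
    energy L μ ≤ potential L μ z := by
  suffices 0 ≤ 2 * (potential L μ z - energy L μ) by linarith
  refine nonneg_of_forall_nonneg_mul_add_mul_sq
    (b := energy L μ - 2 * potential L μ z + L z z) fun t ht0 ht1 => ?_
  have hperturb := hmin (μ.diracPerturbation t z)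
    (Measure.isProbabilityMeasure_diracPerturbation ht0.le ht1 z)
  rw [energy_diracPerturbation hL hLsymm ht0.le ht1] at hperturb
  linear_combination hperturb

end CompactSpace

end MeasureTheory

theorem euler_lagrange_of_minimizer_general {F : Type*} [MetricSpace F] [CompactSpace F]
    [MeasurableSpace F] [BorelSpace F]
    (L : F → F → ℝ) (hLsymm : ∀ x y, L x y = L y x)
    (hL : Continuous fun q : F × F => L q.1 q.2)
    (ρ : Measure F) [IsProbabilityMeasure ρ]
    (hmin : ∀ μ : Measure F, IsProbabilityMeasure μ →
      (∫ x, ∫ y, L x y ∂ρ ∂ρ) ≤ ∫ x, ∫ y, L x y ∂μ ∂μ) :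
    ∀ x : F, (∀ U : Set F, IsOpen U → x ∈ U → 0 < ρ U) →
      (∫ y, L x y ∂ρ) = ⨅ x' : F, ∫ y, L x' y ∂ρ := by
  intro x hx
  have hxρ : x ∈ ρ.support := by
    rw [Measure.support_eq_forall_isOpen]
    exact fun U hxU hU => hx U hU hxU
  have : Nonempty F := ⟨x⟩
  have hℓ : Continuous (potential L ρ) := continuous_potential hL
  have hbdd : BddBelow (Set.range (potential L ρ)) := (isCompact_range hℓ).bddBelow
  exact apply_eq_of_forall_le_of_integral_le hℓ (ciInf_le hbdd)
    (le_ciInf (energy_le_potential_of_forall_energy_le hL hLsymm hmin)) hxρ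

theorem euler_lagrange_of_minimizer {F : Type*} [MetricSpace F] [CompactSpace F]
    [MeasurableSpace F] [BorelSpace F]
    (L : F → F → ℝ) (hLnonneg : ∀ x y, 0 ≤ L x y) (hLsymm : ∀ x y, L x y = L y x)
    (hL : Continuous fun q : F × F => L q.1 q.2)
    (ρ : Measure F) [IsProbabilityMeasure ρ]
    (hmin : ∀ μ : Measure F, IsProbabilityMeasure μ →
      (∫ x, ∫ y, L x y ∂ρ ∂ρ) ≤ ∫ x, ∫ y, L x y ∂μ ∂μ) :
    ∀ x : F, (∀ U : Set F, IsOpen U → x ∈ U → 0 < ρ U) →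
      (∫ y, L x y ∂ρ) = ⨅ x' : F, ∫ y, L x' y ∂ρ :=
  euler_lagrange_of_minimizer_general L hLsymm hL ρ hmin
end

section
/- Let F be a compact metric space, L : F × F → [0,∞) continuous and symmetric, ρ a Borel probability measure on F, and z ∈ F. Suppose that for every τ ∈ (0,1), S((1−τ)ρ + τδ_z) + C(τ) ≥ S(ρ), where C(τ) := (τ²/(2h))·W_p(δ_z,ρ)² + ξτ·W_p(δ_z,ρ) for fixed h, ξ > 0 (i.e., ρ is stable under convex variation toward δ_z up to the penalization). Then ∫∫ L(x,y) dρ(x) dρ(y) ≤ ∫ L(x,z) dρ(x) + (ξ/2)·W_p(δ_z, ρ). -/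
open MeasureTheory Filter

/-! Expanding `S((1-τ)ρ + τδ_z)` in `τ`, the stability inequality reads
`τ (2S(ρ) - 2∫L(·,z)dρ - ξW) ≤ τ² (S(ρ) - 2∫L(·,z)dρ + L(z,z) + W²/(2h))`
with `W = W_p(δ_z, ρ)`; dividing by `τ` and letting `τ → 0⁺` gives the claim. -/

theorem nonpos_of_forall_le_mul {c d : ℝ} (h : ∀ τ : ℝ, 0 < τ → τ < 1 → c ≤ τ * d) :
    c ≤ 0 := by
  have hlim : Tendsto (fun τ : ℝ => τ * d) (nhdsWithin 0 (Set.Ioi 0)) (nhds 0) :=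
    ((continuous_mul_const d).tendsto' 0 0 (zero_mul d)).mono_left nhdsWithin_le_nhds
  refine ge_of_tendsto hlim ?_
  filter_upwards [Ioo_mem_nhdsGT (zero_lt_one' ℝ)] with τ hτ
  exact h τ hτ.1 hτ.2

section Mixture

variable {F : Type*} [MetricSpace F] [CompactSpace F] [MeasurableSpace F] [BorelSpace F]
  (ρ : Measure F) [IsFiniteMeasure ρ] (z : F)

theorem Continuous.integrable_of_compactSpace_s12 {f : F → ℝ} (hf : Continuous f) :
    Integrable f ρ :=
  hf.integrable_of_hasCompactSupport (HasCompactSupport.of_compactSpace f)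

theorem integral_smul_add_smul_dirac {f : F → ℝ} (hf : Continuous f) {s t : ℝ}
    (hs : 0 ≤ s) (ht : 0 ≤ t) :
    ∫ x, f x ∂(ENNReal.ofReal s • ρ + ENNReal.ofReal t • Measure.dirac z) =
      s * ∫ x, f x ∂ρ + t * f z := by
  rw [integral_add_measure
      ((hf.integrable_of_compactSpace_s12 ρ).smul_measure ENNReal.ofReal_ne_top)
      ((hf.integrable_of_compactSpace_s12 _).smul_measure ENNReal.ofReal_ne_top),
    integral_smul_measure, integral_smul_measure, integral_dirac' f z hf.stronglyMeasurable,
    ENNReal.toReal_ofReal hs, ENNReal.toReal_ofReal ht, smul_eq_mul, smul_eq_mul]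

theorem continuous_integral_of_continuous_uncurry {L : F → F → ℝ}
    (hL : Continuous fun q : F × F => L q.1 q.2) :
    Continuous fun x => ∫ y, L x y ∂ρ := by
  simpa using continuous_parametric_integral_of_continuous (μ := ρ) (f := L) hL isCompact_univ

theorem integral_integral_smul_add_smul_dirac {L : F → F → ℝ}
    (hL : Continuous fun q : F × F => L q.1 q.2) {s t : ℝ} (hs : 0 ≤ s) (ht : 0 ≤ t) :
    ∫ x, ∫ y, L x y ∂(ENNReal.ofReal s • ρ + ENNReal.ofReal t • Measure.dirac z)
        ∂(ENNReal.ofReal s • ρ + ENNReal.ofReal t • Measure.dirac z) =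
      s * (s * ∫ x, ∫ y, L x y ∂ρ ∂ρ + t * ∫ x, L x z ∂ρ) +
        t * (s * ∫ y, L z y ∂ρ + t * L z z) := by
  have hLx (x : F) : Continuous (L x) := hL.comp (continuous_const.prodMk continuous_id)
  have hLz : Continuous fun x => L x z := hL.comp (continuous_id.prodMk continuous_const)
  have hI := continuous_integral_of_continuous_uncurry ρ hL
  have hmix : Continuous fun x => s * ∫ y, L x y ∂ρ + t * L x z := by fun_prop
  simp_rw [integral_smul_add_smul_dirac ρ z (hLx _) hs ht]
  rw [integral_smul_add_smul_dirac ρ z hmix hs ht,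
    integral_add ((hI.integrable_of_compactSpace_s12 ρ).const_mul _)
      ((hLz.integrable_of_compactSpace_s12 ρ).const_mul _),
    integral_const_mul, integral_const_mul]

end Mixture

theorem approximate_euler_lagrange_of_stability_general {F : Type*} [MetricSpace F] [CompactSpace F]
    [MeasurableSpace F] [BorelSpace F]
    (L : F → F → ℝ) (hLsymm : ∀ x y, L x y = L y x)
    (hL : Continuous fun q : F × F => L q.1 q.2)
    (p : ℝ) (h ξ : ℝ)
    (ρ : Measure F) [IsProbabilityMeasure ρ] (z : F)
    (hstable : ∀ τ : ℝ, 0 < τ → τ < 1 →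
      (∫ x, ∫ y, L x y ∂ρ ∂ρ) ≤
        (∫ x, ∫ y, L x y
            ∂(ENNReal.ofReal (1 - τ) • ρ + ENNReal.ofReal τ • Measure.dirac z)
            ∂(ENNReal.ofReal (1 - τ) • ρ + ENNReal.ofReal τ • Measure.dirac z)) +
          (τ ^ 2 / (2 * h)) * wassersteinDist p (Measure.dirac z) ρ ^ 2 +
          ξ * τ * wassersteinDist p (Measure.dirac z) ρ) :
    (∫ x, ∫ y, L x y ∂ρ ∂ρ) ≤
      (∫ x, L x z ∂ρ) + (ξ / 2) * wassersteinDist p (Measure.dirac z) ρ := by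
  set S := ∫ x, ∫ y, L x y ∂ρ ∂ρ
  set A := ∫ x, L x z ∂ρ
  set W := wassersteinDist p (Measure.dirac z) ρ
  have hA : ∫ y, L z y ∂ρ = A := integral_congr_ae (ae_of_all _ fun y => hLsymm z y)
  suffices 2 * S - 2 * A - ξ * W ≤ 0 by linarith
  refine nonpos_of_forall_le_mul (d := S - 2 * A + L z z + W ^ 2 / (2 * h)) fun τ hτ0 hτ1 => ?_
  have hexp := hstable τ hτ0 hτ1
  rw [integral_integral_smul_add_smul_dirac ρ z hL (by linarith) hτ0.le, hA] at hexp
  refine le_of_mul_le_mul_left ?_ hτ0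
  linear_combination hexp

theorem approximate_euler_lagrange_of_stability {F : Type*} [MetricSpace F] [CompactSpace F]
    [MeasurableSpace F] [BorelSpace F]
    (L : F → F → ℝ) (hLnonneg : ∀ x y, 0 ≤ L x y) (hLsymm : ∀ x y, L x y = L y x)
    (hL : Continuous fun q : F × F => L q.1 q.2)
    (p : ℝ) (hp : 1 ≤ p) (h ξ : ℝ) (hh : 0 < h) (hξ : 0 < ξ)
    (ρ : Measure F) [IsProbabilityMeasure ρ] (z : F)
    (hstable : ∀ τ : ℝ, 0 < τ → τ < 1 →
      (∫ x, ∫ y, L x y ∂ρ ∂ρ) ≤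
        (∫ x, ∫ y, L x y
            ∂(ENNReal.ofReal (1 - τ) • ρ + ENNReal.ofReal τ • Measure.dirac z)
            ∂(ENNReal.ofReal (1 - τ) • ρ + ENNReal.ofReal τ • Measure.dirac z)) +
          (τ ^ 2 / (2 * h)) * wassersteinDist p (Measure.dirac z) ρ ^ 2 +
          ξ * τ * wassersteinDist p (Measure.dirac z) ρ) :
    (∫ x, ∫ y, L x y ∂ρ ∂ρ) ≤
      (∫ x, L x z ∂ρ) + (ξ / 2) * wassersteinDist p (Measure.dirac z) ρ :=
  approximate_euler_lagrange_of_stability_general L hLsymm hL p h ξ ρ z hstable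
end

section
/- Let F = ℝ², x_0 ∈ F, V : F → ℝ bounded and continuous, c > 0, and define L(x,y) = (V(x)+V(y))/2 + c|x−y|². For p ∈ [2,∞), h > 0, ξ ≥ 0, consider S^{h,ξ}(μ) = ∫V dμ + c∫∫|x−y|² dμ(x)dμ(y) + (1/(2h)) W_p(μ, δ_{x_0})² + ξ W_p(μ, δ_{x_0}). Then every minimizer of S^{h,ξ} over compactly supported Borel probability measures is a Dirac measure δ_{x_1} for some x_1 ∈ F. -/
/-!
Testing minimality of `μ` against the Dirac mass `δ_z` at a point `z` where the
one-point energy `φ z = V z + |z - x₀|² / (2h) + ξ |z - x₀|` lies below its `μ`-average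
gives `S(μ) ≤ ∫ φ dμ`. On the other hand the moment bounds `∫ |x - x₀| dμ ≤ W_p` and
`∫ |x - x₀|² dμ ≤ W_p²` (Jensen, as `p ≥ 2`) give `∫ φ dμ ≤ S(μ) - c ∫∫ |x - y|² dμ dμ`.
Hence the interaction energy vanishes, so `μ ⊗ μ` lives on the diagonal and `μ` is a Dirac
mass.
-/

open MeasureTheory

theorem Continuous.integrable_of_ae_mem_isCompact {X E : Type*} [TopologicalSpace X]
    [MeasurableSpace X] [OpensMeasurableSpace X] [T2Space X] [NormedAddCommGroup E]
    {μ : Measure X} [IsFiniteMeasure μ] {K : Set X} {g : X → E} (hg : Continuous g)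
    (hK : IsCompact K) (hμK : ∀ᵐ x ∂μ, x ∈ K) : Integrable g μ := by
  rw [← Measure.restrict_eq_self_of_ae_mem hμK]
  exact hg.continuousOn.integrableOn_compact hK

section Wasserstein

variable {X : Type*} [MetricSpace X] [MeasurableSpace X] [BorelSpace X]

theorem wassersteinDist_dirac_right (p : ℝ) (μ : Measure X) [IsProbabilityMeasure μ]
    (x₀ : X) :
    wassersteinDist p μ (Measure.dirac x₀) = (∫ x, dist x x₀ ^ p ∂μ) ^ (1 / p) := by
  have hmeas : Measurable fun x : X => dist x x₀ ^ p :=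
    (continuous_id.dist continuous_const).measurable.pow_const p
  have hcost : ∀ P : {P : Measure (X × X) //
      P.map Prod.fst = μ ∧ P.map Prod.snd = Measure.dirac x₀},
      ∫ q, dist q.1 q.2 ^ p ∂(P.1) = ∫ x, dist x x₀ ^ p ∂μ := by
    rintro ⟨P, hfst, hsnd⟩
    have hx₀ : ∀ᵐ q ∂P, q.2 = x₀ := by
      have : ∀ᵐ y ∂(P.map Prod.snd), y = x₀ := by simp [hsnd]
      exact ae_of_ae_map measurable_snd.aemeasurable this
    calc ∫ q, dist q.1 q.2 ^ p ∂P = ∫ q, dist q.1 x₀ ^ p ∂P :=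
          integral_congr_ae (hx₀.mono fun q hq => by simp only [hq])
      _ = ∫ x, dist x x₀ ^ p ∂μ := by
          rw [← hfst, integral_map measurable_fst.aemeasurable hmeas.aestronglyMeasurable]
  have : Nonempty {P : Measure (X × X) //
      P.map Prod.fst = μ ∧ P.map Prod.snd = Measure.dirac x₀} :=
    ⟨⟨μ.prod (Measure.dirac x₀), by simp, by simp⟩⟩
  rw [wassersteinDist, iInf_congr hcost, ciInf_const]

theorem wassersteinDist_dirac_dirac {p : ℝ} (hp : p ≠ 0) (z x₀ : X) :
    wassersteinDist p (Measure.dirac z) (Measure.dirac x₀) = dist z x₀ := by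
  rw [wassersteinDist_dirac_right, integral_dirac, ← Real.rpow_mul dist_nonneg,
    mul_one_div_cancel hp, Real.rpow_one]

theorem integral_rpow_dist_le_wassersteinDist_rpow {p r : ℝ} (hr : 0 < r) (hrp : r ≤ p)
    {μ : Measure X} [IsProbabilityMeasure μ] {x₀ : X}
    (hr_int : Integrable (fun x => dist x x₀ ^ r) μ)
    (hp_int : Integrable (fun x => dist x x₀ ^ p) μ) :
    ∫ x, dist x x₀ ^ r ∂μ ≤ wassersteinDist p μ (Measure.dirac x₀) ^ r := by
  have hp : 0 < p := hr.trans_le hrp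
  have hpow : ∀ x, (dist x x₀ ^ r) ^ (p / r) = dist x x₀ ^ p := fun x => by
    rw [← Real.rpow_mul dist_nonneg, mul_div_cancel₀ _ hr.ne']
  have hjensen : (∫ x, dist x x₀ ^ r ∂μ) ^ (p / r) ≤ ∫ x, dist x x₀ ^ p ∂μ := by
    simpa only [hpow] using (convexOn_rpow ((one_le_div hr).2 hrp)).map_integral_le
      (Real.continuous_rpow_const (div_pos hp hr).le).continuousOn isClosed_Ici
      (ae_of_all _ fun x => Real.rpow_nonneg dist_nonneg r) hr_int
      (by simpa [Function.comp_def, hpow])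
  have hW : wassersteinDist p μ (Measure.dirac x₀) ^ r =
      (∫ x, dist x x₀ ^ p ∂μ) ^ (p / r)⁻¹ := by
    rw [wassersteinDist_dirac_right, ← Real.rpow_mul (integral_nonneg fun x => by positivity)]
    congr 1
    field_simp
  rw [hW, Real.le_rpow_inv_iff_of_pos (integral_nonneg fun x => by positivity)
    (integral_nonneg fun x => by positivity) (div_pos hp hr)]
  exact hjensen

theorem integral_mul_dist_sq_add_mul_dist_le {p a b : ℝ} (hp : 2 ≤ p) (ha : 0 ≤ a)
    (hb : 0 ≤ b) {μ : Measure X} [IsProbabilityMeasure μ] {x₀ : X}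
    (h₁ : Integrable (fun x => dist x x₀) μ) (h₂ : Integrable (fun x => dist x x₀ ^ 2) μ)
    (hp_int : Integrable (fun x => dist x x₀ ^ p) μ) :
    ∫ x, (a * dist x x₀ ^ 2 + b * dist x x₀) ∂μ ≤
      a * wassersteinDist p μ (Measure.dirac x₀) ^ 2 +
        b * wassersteinDist p μ (Measure.dirac x₀) := by
  have hW₁ : ∫ x, dist x x₀ ∂μ ≤ wassersteinDist p μ (Measure.dirac x₀) := by
    simpa using integral_rpow_dist_le_wassersteinDist_rpow one_pos (by linarith)
      (by simpa using h₁) hp_int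
  have hW₂ : ∫ x, dist x x₀ ^ 2 ∂μ ≤ wassersteinDist p μ (Measure.dirac x₀) ^ 2 := by
    simpa using integral_rpow_dist_le_wassersteinDist_rpow two_pos hp (by simpa using h₂) hp_int
  rw [integral_add (h₂.const_mul a) (h₁.const_mul b), integral_const_mul, integral_const_mul]
  gcongr

end Wasserstein

theorem exists_eq_dirac_of_integral_integral_dist_sq_eq_zero {X : Type*} [MetricSpace X]
    [MeasurableSpace X] [BorelSpace X] {μ : Measure X} [IsProbabilityMeasure μ]
    (hint : Integrable (fun q : X × X => dist q.1 q.2 ^ 2) (μ.prod μ))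
    (h0 : ∫ x, ∫ y, dist x y ^ 2 ∂μ ∂μ = 0) :
    ∃ x₁, μ = Measure.dirac x₁ := by
  rw [← integral_prod _ hint, integral_eq_zero_iff_of_nonneg (fun q => by positivity) hint] at h0
  obtain ⟨x₁, hx₁⟩ := (Measure.ae_ae_of_ae_prod h0).exists
  have hae : (id : X → X) =ᵐ[μ] fun _ => x₁ := hx₁.mono fun y hy => by
    simpa [eq_comm] using hy
  refine ⟨x₁, ?_⟩
  calc μ = μ.map id := Measure.map_id.symm
    _ = μ.map (fun _ => x₁) := Measure.map_congr hae
    _ = Measure.dirac x₁ := by simp [Measure.map_const]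

theorem minimizers_are_dirac_general
    (x₀ : EuclideanSpace ℝ (Fin 2))
    (V : EuclideanSpace ℝ (Fin 2) → ℝ) (hVcont : Continuous V)
    (c : ℝ) (hc : 0 < c) (p : ℝ) (hp : 2 ≤ p) (h ξ : ℝ) (hh : 0 < h) (hξ : 0 ≤ ξ)
    (Shξ : Measure (EuclideanSpace ℝ (Fin 2)) → ℝ)
    (hShξ : ∀ μ : Measure (EuclideanSpace ℝ (Fin 2)),
      Shξ μ = (∫ x, V x ∂μ) + c * (∫ x, ∫ y, dist x y ^ 2 ∂μ ∂μ) +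
        (1 / (2 * h)) * wassersteinDist p μ (Measure.dirac x₀) ^ 2 +
        ξ * wassersteinDist p μ (Measure.dirac x₀))
    (μ : Measure (EuclideanSpace ℝ (Fin 2))) [IsProbabilityMeasure μ]
    (hμcpt : ∃ K : Set (EuclideanSpace ℝ (Fin 2)), IsCompact K ∧ μ Kᶜ = 0)
    (hmin : ∀ ν : Measure (EuclideanSpace ℝ (Fin 2)), IsProbabilityMeasure ν →
      (∃ K : Set (EuclideanSpace ℝ (Fin 2)), IsCompact K ∧ ν Kᶜ = 0) →
      Shξ μ ≤ Shξ ν) :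
    ∃ x₁ : EuclideanSpace ℝ (Fin 2), μ = Measure.dirac x₁ := by
  obtain ⟨K, hK, hμK⟩ := hμcpt
  have hK_ae : ∀ᵐ x ∂μ, x ∈ K := mem_ae_iff.mpr hμK
  have hint {g : EuclideanSpace ℝ (Fin 2) → ℝ} (hg : Continuous g) : Integrable g μ :=
    hg.integrable_of_ae_mem_isCompact hK hK_ae
  set I := ∫ x, ∫ y, dist x y ^ 2 ∂μ ∂μ
  set W := wassersteinDist p μ (Measure.dirac x₀)
  set φ := fun z => V z + (1 / (2 * h) * dist z x₀ ^ 2 + ξ * dist z x₀)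
  have hφ (z) : Shξ (Measure.dirac z) = φ z := by
    simp [hShξ, φ, wassersteinDist_dirac_dirac (by linarith : p ≠ 0), add_assoc]
  have hφ_le : ∫ z, φ z ∂μ ≤ Shξ μ - c * I := by
    have hmoment := integral_mul_dist_sq_add_mul_dist_le (a := 1 / (2 * h)) (x₀ := x₀) hp
      (by positivity) hξ (hint (by fun_prop)) (hint (by fun_prop))
      (hint ((continuous_id.dist continuous_const).rpow_const fun _ => Or.inr (by linarith)))
    have hSμ : Shξ μ = ∫ x, V x ∂μ + c * I + 1 / (2 * h) * W ^ 2 + ξ * W := hShξ μ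
    rw [integral_add (hint hVcont) (hint (by fun_prop)), hSμ]
    linarith
  obtain ⟨z, hz⟩ := exists_le_integral (hint (by fun_prop) : Integrable φ μ)
  have hcI : c * I ≤ 0 := by
    linarith [hmin (Measure.dirac z) inferInstance ⟨{z}, isCompact_singleton, by simp⟩, hφ z]
  have hI : I = 0 := le_antisymm (nonpos_of_mul_nonpos_right hcI hc)
    (integral_nonneg fun x => integral_nonneg fun y => by positivity)
  refine exists_eq_dirac_of_integral_integral_dist_sq_eq_zero ?_ hI
  exact (continuous_dist.pow 2).integrable_of_ae_mem_isCompact (hK.prod hK)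
    ((Measure.quasiMeasurePreserving_fst.ae hK_ae).and
      (Measure.quasiMeasurePreserving_snd.ae hK_ae))

theorem minimizers_are_dirac
    (x₀ : EuclideanSpace ℝ (Fin 2))
    (V : EuclideanSpace ℝ (Fin 2) → ℝ) (hVcont : Continuous V)
    (hVbdd : ∃ C : ℝ, ∀ x, |V x| ≤ C)
    (c : ℝ) (hc : 0 < c) (p : ℝ) (hp : 2 ≤ p) (h ξ : ℝ) (hh : 0 < h) (hξ : 0 ≤ ξ)
    (Shξ : Measure (EuclideanSpace ℝ (Fin 2)) → ℝ)
    (hShξ : ∀ μ : Measure (EuclideanSpace ℝ (Fin 2)),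
      Shξ μ = (∫ x, V x ∂μ) + c * (∫ x, ∫ y, dist x y ^ 2 ∂μ ∂μ) +
        (1 / (2 * h)) * wassersteinDist p μ (Measure.dirac x₀) ^ 2 +
        ξ * wassersteinDist p μ (Measure.dirac x₀))
    (μ : Measure (EuclideanSpace ℝ (Fin 2))) [IsProbabilityMeasure μ]
    (hμcpt : ∃ K : Set (EuclideanSpace ℝ (Fin 2)), IsCompact K ∧ μ Kᶜ = 0)
    (hmin : ∀ ν : Measure (EuclideanSpace ℝ (Fin 2)), IsProbabilityMeasure ν →
      (∃ K : Set (EuclideanSpace ℝ (Fin 2)), IsCompact K ∧ ν Kᶜ = 0) →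
      Shξ μ ≤ Shξ ν) :
    ∃ x₁ : EuclideanSpace ℝ (Fin 2), μ = Measure.dirac x₁ :=
  minimizers_are_dirac_general x₀ V hVcont c hc p hp h ξ hh hξ Shξ hShξ μ hμcpt hmin
end

section
/- Let K be a compact metric space and suppose m^{(0)}, m^{(1)}, m^{(2)} are finite nonnegative Borel measures on K such that for every Borel set Ω ⊂ K, m^{(1)}(Ω)² ≤ m^{(0)}(Ω)·m^{(2)}(Ω). Then m^{(1)} is absolutely continuous with respect to m^{(0)}, so there exists f ∈ L¹(K, m^{(0)}) with m^{(1)} = f·m^{(0)}; moreover f ∈ L²(K, m^{(0)}) with f²·m^{(0)} ≤ m^{(2)} (as measures), so ∫ f² dm^{(0)} ≤ m^{(2)}(K). -/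
/-! With `g = dν/dμ`, `h = dρ/dμ` and `T` a `μ`-conull set on which the singular part of `ρ`
vanishes, a set `E ⊆ T` with `a ≤ g` and `h < a²` on `E` satisfies
`(a μ(E))² ≤ ν(E)² ≤ μ(E) ρ(E) < μ(E) a² μ(E)` unless `μ(E) = 0`. Countably many such sets
(rational `a`) cover `{h < g²} ∩ T`, so `g² ≤ h` holds `μ`-a.e., whence
`∫_Ω g² dμ ≤ ∫_Ω h dμ ≤ ρ(Ω)`. -/

open MeasureTheory
open scoped ENNReal NNReal

theorem ENNReal.exists_rat_le_and_lt_sq {a b : ℝ≥0∞} (h : a < b ^ 2) :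
    ∃ q : ℚ, (Real.toNNReal q : ℝ≥0∞) ≤ b ∧ a < (Real.toNNReal q : ℝ≥0∞) ^ 2 := by
  lift a to ℝ≥0 using (h.trans_le le_top).ne
  have hsqrt : (NNReal.sqrt a : ℝ≥0∞) < b := by
    by_contra! hb
    have : b ^ 2 ≤ (NNReal.sqrt a : ℝ≥0∞) ^ 2 := by gcongr
    rw [← ENNReal.coe_pow, NNReal.sq_sqrt] at this
    exact (h.trans_le this).false
  obtain ⟨q, -, hsq, hqb⟩ := ENNReal.lt_iff_exists_rat_btwn.1 hsqrt
  refine ⟨q, hqb.le, ?_⟩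
  rw [← ENNReal.coe_pow, ENNReal.coe_lt_coe,
    ← lt_iff_lt_of_le_iff_le NNReal.le_sqrt_iff_sq_le]
  exact_mod_cast hsq

namespace MeasureTheory.Measure

variable {α : Type*} [MeasurableSpace α] {μ ν ρ : Measure α}

theorem absolutelyContinuous_of_sq_le_mul
    (h : ∀ s, MeasurableSet s → ν s ^ 2 ≤ μ s * ρ s) : ν ≪ μ :=
  AbsolutelyContinuous.mk fun s hs hμs => by simpa [hμs] using h s hs

theorem measure_eq_zero_of_le_rnDeriv_of_rnDeriv_lt_sq [IsFiniteMeasure μ]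
    [ν.HaveLebesgueDecomposition μ] [ρ.HaveLebesgueDecomposition μ]
    (h : ∀ s, MeasurableSet s → ν s ^ 2 ≤ μ s * ρ s) {s : Set α} (hs : MeasurableSet s)
    (hsing : ρ.singularPart μ s = 0) (a : ℝ≥0) (hν : ∀ x ∈ s, (a : ℝ≥0∞) ≤ ν.rnDeriv μ x)
    (hρ : ∀ x ∈ s, ρ.rnDeriv μ x < (a : ℝ≥0∞) ^ 2) : μ s = 0 := by
  by_contra hμs
  have hνs : a * μ s ≤ ν s := by
    rw [← setLIntegral_rnDeriv (absolutelyContinuous_of_sq_le_mul h), ← setLIntegral_const]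
    exact setLIntegral_mono (measurable_rnDeriv ν μ) hν
  have hρs : ρ s < (a : ℝ≥0∞) ^ 2 * μ s := by
    have hρ_le : ∫⁻ x in s, ρ.rnDeriv μ x ∂μ ≤ (a : ℝ≥0∞) ^ 2 * μ s := by
      rw [← setLIntegral_const]
      exact setLIntegral_mono measurable_const fun x hx => (hρ x hx).le
    calc ρ s = ∫⁻ x in s, ρ.rnDeriv μ x ∂μ := by
          rw [← withDensity_apply' _ s, ← add_zero (μ.withDensity _ s), ← hsing,
            ← Measure.add_apply, rnDeriv_add_singularPart]
      _ < ∫⁻ _ in s, (a : ℝ≥0∞) ^ 2 ∂μ :=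
          setLIntegral_strict_mono hs hμs measurable_const
            (ne_top_of_le_ne_top (by finiteness) hρ_le) (.of_forall hρ)
      _ = (a : ℝ≥0∞) ^ 2 * μ s := setLIntegral_const s _
  have : (a * μ s) ^ 2 < (a * μ s) ^ 2 :=
    calc (a * μ s) ^ 2 ≤ ν s ^ 2 := by gcongr
      _ ≤ μ s * ρ s := h s hs
      _ < μ s * ((a : ℝ≥0∞) ^ 2 * μ s) := by gcongr; exact measure_ne_top μ s
      _ = (a * μ s) ^ 2 := by ring
  exact this.false

theorem rnDeriv_sq_ae_le_rnDeriv [IsFiniteMeasure μ]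
    [ν.HaveLebesgueDecomposition μ] [ρ.HaveLebesgueDecomposition μ]
    (h : ∀ s, MeasurableSet s → ν s ^ 2 ≤ μ s * ρ s) :
    ∀ᵐ x ∂μ, ν.rnDeriv μ x ^ 2 ≤ ρ.rnDeriv μ x := by
  have hperp := mutuallySingular_singularPart ρ μ
  set T := hperp.nullSet
  have hT : MeasurableSet T := hperp.measurableSet_nullSet
  let E : ℚ → Set α := fun q => T ∩ {x | (Real.toNNReal q : ℝ≥0∞) ≤ ν.rnDeriv μ x} ∩
    {x | ρ.rnDeriv μ x < (Real.toNNReal q : ℝ≥0∞) ^ 2}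
  have hE : ∀ q, μ (E q) = 0 := fun q =>
    measure_eq_zero_of_le_rnDeriv_of_rnDeriv_lt_sq h
      ((hT.inter (measurableSet_le measurable_const (measurable_rnDeriv ν μ))).inter
        (measurableSet_lt (measurable_rnDeriv ρ μ) measurable_const))
      (measure_mono_null (fun x hx => hx.1.1) hperp.measure_nullSet)
      _ (fun x hx => hx.1.2) (fun x hx => hx.2)
  have hae_T : ∀ᵐ x ∂μ, x ∈ T := hperp.measure_compl_nullSet
  have hae_E : ∀ᵐ x ∂μ, ∀ q, x ∉ E q :=
    ae_all_iff.2 fun q => measure_eq_zero_iff_ae_notMem.1 (hE q)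
  filter_upwards [hae_T, hae_E] with x hxT hxE
  by_contra! hlt
  obtain ⟨q, hqν, hqρ⟩ := ENNReal.exists_rat_le_and_lt_sq hlt
  exact hxE q ⟨⟨hxT, hqν⟩, hqρ⟩

theorem setLIntegral_rnDeriv_sq_le [IsFiniteMeasure μ]
    [ν.HaveLebesgueDecomposition μ] [ρ.HaveLebesgueDecomposition μ]
    (h : ∀ s, MeasurableSet s → ν s ^ 2 ≤ μ s * ρ s) (s : Set α) :
    ∫⁻ x in s, ν.rnDeriv μ x ^ 2 ∂μ ≤ ρ s :=
  (setLIntegral_mono_ae (measurable_rnDeriv ρ μ).aemeasurable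
    ((rnDeriv_sq_ae_le_rnDeriv h).mono fun _ hx _ => hx)).trans (setLIntegral_rnDeriv_le s)

end MeasureTheory.Measure

theorem moment_measure_radon_nikodym_general {K : Type*} [MeasurableSpace K]
    (m0 m1 m2 : Measure K) [IsFiniteMeasure m0] [IsFiniteMeasure m1] [IsFiniteMeasure m2]
    (h : ∀ Ω : Set K, MeasurableSet Ω → (m1 Ω) ^ 2 ≤ m0 Ω * m2 Ω) :
    m1 ≪ m0 ∧
    ∃ f : K → ℝ, (∀ x, 0 ≤ f x) ∧ Integrable f m0 ∧
      m1 = m0.withDensity (fun x => ENNReal.ofReal (f x)) ∧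
      Integrable (fun x => f x ^ 2) m0 ∧
      (∀ Ω : Set K, MeasurableSet Ω → ∫ x in Ω, f x ^ 2 ∂m0 ≤ (m2 Ω).toReal) ∧
      ∫ x, f x ^ 2 ∂m0 ≤ (m2 Set.univ).toReal := by
  have hac : m1 ≪ m0 := Measure.absolutelyContinuous_of_sq_le_mul h
  have hmeas : Measurable fun x => m1.rnDeriv m0 x ^ 2 :=
    (Measure.measurable_rnDeriv m1 m0).pow_const 2
  have hfin : ∀ᵐ x ∂m0, m1.rnDeriv m0 x ^ 2 < ∞ :=
    (Measure.rnDeriv_lt_top m1 m0).mono fun _ hx => ENNReal.pow_lt_top hx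
  have hsq_le : ∀ Ω, ∫ x in Ω, (m1.rnDeriv m0 x).toReal ^ 2 ∂m0 ≤ (m2 Ω).toReal := fun Ω => by
    simp_rw [← ENNReal.toReal_pow]
    rw [integral_toReal hmeas.aemeasurable (ae_restrict_of_ae hfin)]
    exact ENNReal.toReal_mono (measure_ne_top m2 Ω) (Measure.setLIntegral_rnDeriv_sq_le h Ω)
  refine ⟨hac, fun x => (m1.rnDeriv m0 x).toReal, fun _ => ENNReal.toReal_nonneg,
    Measure.integrable_toReal_rnDeriv, ?_, ?_, fun Ω _ => hsq_le Ω,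
    by simpa using hsq_le Set.univ⟩
  · rw [withDensity_congr_ae (ofReal_toReal_ae_eq (Measure.rnDeriv_lt_top m1 m0)),
      Measure.withDensity_rnDeriv_eq m1 m0 hac]
  · simp_rw [← ENNReal.toReal_pow]
    refine integrable_toReal_of_lintegral_ne_top hmeas.aemeasurable (ne_top_of_le_ne_top
      (measure_ne_top m2 Set.univ) ?_)
    simpa using Measure.setLIntegral_rnDeriv_sq_le h Set.univ

theorem moment_measure_radon_nikodym {K : Type*} [MetricSpace K] [CompactSpace K]
    [MeasurableSpace K] [BorelSpace K]
    (m0 m1 m2 : Measure K) [IsFiniteMeasure m0] [IsFiniteMeasure m1] [IsFiniteMeasure m2]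
    (h : ∀ Ω : Set K, MeasurableSet Ω → (m1 Ω) ^ 2 ≤ m0 Ω * m2 Ω) :
    m1 ≪ m0 ∧
    ∃ f : K → ℝ, (∀ x, 0 ≤ f x) ∧ Integrable f m0 ∧
      m1 = m0.withDensity (fun x => ENNReal.ofReal (f x)) ∧
      Integrable (fun x => f x ^ 2) m0 ∧
      (∀ Ω : Set K, MeasurableSet Ω → ∫ x in Ω, f x ^ 2 ∂m0 ≤ (m2 Ω).toReal) ∧
      ∫ x, f x ^ 2 ∂m0 ≤ (m2 Set.univ).toReal :=
  moment_measure_radon_nikodym_general m0 m1 m2 h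
end
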